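/- arXiv:2502.13221 — 3 statements merged into one kernel-verified Lean document; each statement's English description precedes it below -/
import Mathlib

section
/- Let Z₁ and Z₂ be Borel-measurable random vectors with values in ℝ^d, defined on probability spaces (Ω₁, P₁) and (Ω₂, P₂) respectively. Then Z₁ stochastically dominates Z₂ if and only if for every bounded Borel-measurable monotone function u : ℝ^d → ℝ one has E[u(Z₁)] ≥ E[u(Z₂)]. -/
open MeasureTheory

/-- Multivariate first-order stochastic dominance is equivalent to domination of
expectations of all bounded measurable monotone utilities. -/
theorem stochastic_dominance_iff_monotone_utilities
    {d : ℕ} {Ω₁ Ω₂ : Type*} [MeasurableSpace Ω₁] [MeasurableSpace Ω₂]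
    (P₁ : Measure Ω₁) (P₂ : Measure Ω₂)
    [IsProbabilityMeasure P₁] [IsProbabilityMeasure P₂]
    (Z₁ : Ω₁ → (Fin d → ℝ)) (Z₂ : Ω₂ → (Fin d → ℝ))
    (hZ₁ : Measurable Z₁) (hZ₂ : Measurable Z₂) :
    (∀ S : Set (Fin d → ℝ), MeasurableSet S → IsLowerSet S →
        P₁ (Z₁ ⁻¹' S) ≤ P₂ (Z₂ ⁻¹' S)) ↔
    (∀ u : (Fin d → ℝ) → ℝ, Measurable u → Monotone u → (∃ C, ∀ x, |u x| ≤ C) →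
        ∫ ω, u (Z₂ ω) ∂P₂ ≤ ∫ ω, u (Z₁ ω) ∂P₁) := by
  set μ₁ := P₁.map Z₁ with hμ₁
  set μ₂ := P₂.map Z₂ with hμ₂
  have hpm₁ : IsProbabilityMeasure μ₁ := Measure.isProbabilityMeasure_map hZ₁.aemeasurable
  have hpm₂ : IsProbabilityMeasure μ₂ := Measure.isProbabilityMeasure_map hZ₂.aemeasurable
  constructor
  · rintro h u hu hmono ⟨C, hC⟩
    have hC0 : 0 ≤ C := le_trans (abs_nonneg _) (hC 0)
    -- rewrite as integrals over map measures
    rw [← integral_map hZ₁.aemeasurable hu.aestronglyMeasurable,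
        ← integral_map hZ₂.aemeasurable hu.aestronglyMeasurable]
    set v : (Fin d → ℝ) → ℝ := fun x => u x + C with hv
    have hvm : Measurable v := hu.add_const C
    have hv0 : ∀ x, 0 ≤ v x := fun x => by
      have := abs_le.mp (hC x); simp [hv]; linarith
    have hv2C : ∀ x, v x ≤ 2 * C := fun x => by
      have := abs_le.mp (hC x); simp [hv]; linarith
    -- key measure inequality on upper level sets
    have hkey : ∀ t : ℝ, μ₂ {a | t < v a} ≤ μ₁ {a | t < v a} := by
      intro t
      have hSm : MeasurableSet {a : Fin d → ℝ | v a ≤ t} :=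
        measurableSet_le hvm measurable_const
      have hSl : IsLowerSet {a : Fin d → ℝ | v a ≤ t} := fun x y hyx hx =>
        le_trans (add_le_add (hmono hyx) (le_refl C)) hx
      have h1 := h _ hSm hSl
      have e1 : μ₁ {a : Fin d → ℝ | v a ≤ t} = P₁ (Z₁ ⁻¹' {a | v a ≤ t}) :=
        Measure.map_apply hZ₁ hSm
      have e2 : μ₂ {a : Fin d → ℝ | v a ≤ t} = P₂ (Z₂ ⁻¹' {a | v a ≤ t}) :=
        Measure.map_apply hZ₂ hSm
      have hcompl : {a : Fin d → ℝ | t < v a} = {a : Fin d → ℝ | v a ≤ t}ᶜ := by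
        ext a; simp [not_le]
      rw [hcompl, prob_compl_eq_one_sub hSm, prob_compl_eq_one_sub hSm, e1, e2]
      exact tsub_le_tsub_left h1 1
    -- lintegral comparison
    have hlin : ∫⁻ x, ENNReal.ofReal (v x) ∂μ₂ ≤ ∫⁻ x, ENNReal.ofReal (v x) ∂μ₁ := by
      rw [lintegral_eq_lintegral_meas_lt μ₂ (ae_of_all _ hv0) hvm.aemeasurable,
          lintegral_eq_lintegral_meas_lt μ₁ (ae_of_all _ hv0) hvm.aemeasurable]
      exact lintegral_mono fun t => hkey t
    have hfin : ∀ (μ : Measure (Fin d → ℝ)) [IsProbabilityMeasure μ],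
        ∫⁻ x, ENNReal.ofReal (v x) ∂μ ≠ ⊤ := by
      intro μ hμ
      have : ∫⁻ x, ENNReal.ofReal (v x) ∂μ ≤ ENNReal.ofReal (2 * C) := by
        calc ∫⁻ x, ENNReal.ofReal (v x) ∂μ ≤ ∫⁻ _, ENNReal.ofReal (2 * C) ∂μ :=
              lintegral_mono fun x => ENNReal.ofReal_le_ofReal (hv2C x)
          _ = ENNReal.ofReal (2 * C) := by simp
      exact ne_top_of_le_ne_top ENNReal.ofReal_ne_top this
    have hvle : ∫ x, v x ∂μ₂ ≤ ∫ x, v x ∂μ₁ := by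
      rw [integral_eq_lintegral_of_nonneg_ae (ae_of_all _ hv0) hvm.aestronglyMeasurable,
          integral_eq_lintegral_of_nonneg_ae (ae_of_all _ hv0) hvm.aestronglyMeasurable]
      exact ENNReal.toReal_mono (hfin μ₁) hlin
    -- integrability of u
    have hint : ∀ (μ : Measure (Fin d → ℝ)) [IsProbabilityMeasure μ], Integrable u μ := by
      intro μ hμ
      exact (integrable_const C).mono' hu.aestronglyMeasurable
        (ae_of_all _ fun x => by simpa using hC x)
    have e₁ : ∫ x, v x ∂μ₁ = ∫ x, u x ∂μ₁ + C := by
      rw [hv, integral_add (hint μ₁) (integrable_const C)]; simp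
    have e₂ : ∫ x, v x ∂μ₂ = ∫ x, u x ∂μ₂ + C := by
      rw [hv, integral_add (hint μ₂) (integrable_const C)]; simp
    rw [e₁, e₂] at hvle
    linarith
  · intro h S hSm hSl
    set u : (Fin d → ℝ) → ℝ := Sᶜ.indicator 1 with hu
    have hum : Measurable u := (measurable_one).indicator hSm.compl
    have humono : Monotone u := by
      intro x y hxy
      by_cases hx : x ∈ S
      · exact le_trans (by simp [hu, hx]) (Set.indicator_nonneg (by simp) y)
      · have hy : y ∈ Sᶜ := fun hyS => hx (hSl hxy hyS)
        simp [hu, hx, hy]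
    have hub : ∃ C, ∀ x, |u x| ≤ C :=
      ⟨1, fun x => by by_cases hx : x ∈ S <;> simp [hu, hx]⟩
    have hexp := h u hum humono hub
    have e1 : ∫ ω, u (Z₁ ω) ∂P₁ = (P₁ (Z₁ ⁻¹' S)ᶜ).toReal := by
      have : (fun ω => u (Z₁ ω)) = (Z₁ ⁻¹' Sᶜ).indicator 1 := by
        ext ω; by_cases hω : Z₁ ω ∈ S <;> simp [hu, hω, Set.indicator_apply]
      rw [this, integral_indicator_one (hZ₁ hSm.compl)]
      simp [Set.preimage_compl]
      rfl
    have e2 : ∫ ω, u (Z₂ ω) ∂P₂ = (P₂ (Z₂ ⁻¹' S)ᶜ).toReal := by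
      have : (fun ω => u (Z₂ ω)) = (Z₂ ⁻¹' Sᶜ).indicator 1 := by
        ext ω; by_cases hω : Z₂ ω ∈ S <;> simp [hu, hω, Set.indicator_apply]
      rw [this, integral_indicator_one (hZ₂ hSm.compl)]
      simp [Set.preimage_compl]
      rfl
    rw [e1, e2] at hexp
    have hcle : P₂ (Z₂ ⁻¹' S)ᶜ ≤ P₁ (Z₁ ⁻¹' S)ᶜ :=
      (ENNReal.toReal_le_toReal (measure_ne_top _ _) (measure_ne_top _ _)).mp hexp
    have c1 : P₁ (Z₁ ⁻¹' S)ᶜ = 1 - P₁ (Z₁ ⁻¹' S) := prob_compl_eq_one_sub (hZ₁ hSm)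
    have c2 : P₂ (Z₂ ⁻¹' S)ᶜ = 1 - P₂ (Z₂ ⁻¹' S) := prob_compl_eq_one_sub (hZ₂ hSm)
    rw [c1, c2] at hcle
    have h1 : P₁ (Z₁ ⁻¹' S) ≤ 1 := prob_le_one
    have h2 : P₂ (Z₂ ⁻¹' S) ≤ 1 := prob_le_one
    have := tsub_le_tsub_left hcle 1
    rwa [ENNReal.sub_sub_cancel ENNReal.one_ne_top h1,
         ENNReal.sub_sub_cancel ENNReal.one_ne_top h2] at this
end

section
/- (Corollary 5.8, TPR disparity is nonnegative under traditional hiring) Let μ be a Borel probability measure on ℝ^d (the distribution of qualified candidates' unmanipulated resumes), let s : ℝ^d → ℝ be Borel-measurable and monotone, let τ ∈ ℝ, and let κ_P and κ_U be Markov kernels from ℝ^d to ℝ^d (the distributions of the privileged and unprivileged groups' LLM manipulations) such that for every x ∈ ℝ^d and every Borel-measurable lower set S ⊆ ℝ^d, κ_P(x)(S) ≤ κ_U(x)(S). Define TPR_g := ∫ κ_g(x)({z : max(s(x), s(z)) ≥ τ}) dμ(x) for g ∈ {P, U}. Then Δ_TPR := TPR_P − TPR_U ≥ 0. -/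
open MeasureTheory ProbabilityTheory

/-- Corollary 5.8: under traditional hiring with a dominating privileged-group LLM,
the TPR disparity is nonnegative. -/
theorem tpr_disparity_nonneg_traditional
    {d : ℕ}
    (μ : Measure (Fin d → ℝ)) [IsProbabilityMeasure μ]
    (s : (Fin d → ℝ) → ℝ) (hs : Measurable s) (hmono : Monotone s) (τ : ℝ)
    (κP κU : Kernel (Fin d → ℝ) (Fin d → ℝ))
    [IsMarkovKernel κP] [IsMarkovKernel κU]
    (hdom : ∀ x : Fin d → ℝ, ∀ S : Set (Fin d → ℝ), MeasurableSet S → IsLowerSet S →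
        κP x S ≤ κU x S) :
    0 ≤ (∫ x, (κP x {z | τ ≤ max (s x) (s z)}).toReal ∂μ)
        - (∫ x, (κU x {z | τ ≤ max (s x) (s z)}).toReal ∂μ) := by
  have hAmeas : ∀ x : Fin d → ℝ, MeasurableSet {z | τ ≤ max (s x) (s z)} := fun x =>
    measurableSet_le measurable_const (measurable_const.max hs)
  -- pointwise inequality on the kernels
  have hpt : ∀ x : Fin d → ℝ,
      κU x {z | τ ≤ max (s x) (s z)} ≤ κP x {z | τ ≤ max (s x) (s z)} := by
    intro x
    have hcmeas : MeasurableSet ({z | τ ≤ max (s x) (s z)}ᶜ) := (hAmeas x).compl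
    have hlower : IsLowerSet ({z | τ ≤ max (s x) (s z)}ᶜ) := by
      intro a b hba ha
      simp only [Set.mem_compl_iff, Set.mem_setOf_eq, not_le] at ha ⊢
      exact lt_of_le_of_lt (max_le_max le_rfl (hmono hba)) ha
    have hc := hdom x _ hcmeas hlower
    have hP := prob_compl_eq_one_sub (μ := κP x) (hAmeas x)
    have hU := prob_compl_eq_one_sub (μ := κU x) (hAmeas x)
    have h1P : κP x {z | τ ≤ max (s x) (s z)} ≤ 1 := prob_le_one
    have h1U : κU x {z | τ ≤ max (s x) (s z)} ≤ 1 := prob_le_one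
    rw [hP, hU] at hc
    -- from 1 - a ≤ 1 - b with a,b ≤ 1 conclude b ≤ a
    have := tsub_le_tsub_left (le_refl (1 : ENNReal)) (0 : ENNReal)
    -- use ENNReal arithmetic
    have hU' : κU x {z | τ ≤ max (s x) (s z)}
        = 1 - (1 - κU x {z | τ ≤ max (s x) (s z)}) := by
      rw [ENNReal.sub_sub_cancel ENNReal.one_ne_top h1U]
    have hP' : κP x {z | τ ≤ max (s x) (s z)}
        = 1 - (1 - κP x {z | τ ≤ max (s x) (s z)}) := by
      rw [ENNReal.sub_sub_cancel ENNReal.one_ne_top h1P]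
    rw [hU', hP']
    exact tsub_le_tsub_left hc 1
  -- integrability
  have hprod : MeasurableSet {p : (Fin d → ℝ) × (Fin d → ℝ) | τ ≤ max (s p.1) (s p.2)} :=
    measurableSet_le measurable_const ((hs.comp measurable_fst).max (hs.comp measurable_snd))
  have hmP : Measurable fun x => (κP x {z | τ ≤ max (s x) (s z)}) :=
    Kernel.measurable_kernel_prodMk_left hprod
  have hmU : Measurable fun x => (κU x {z | τ ≤ max (s x) (s z)}) :=
    Kernel.measurable_kernel_prodMk_left hprod
  have hiP : Integrable (fun x => (κP x {z | τ ≤ max (s x) (s z)}).toReal) μ := by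
    refine (integrable_const (1 : ℝ)).mono' hmP.ennreal_toReal.aestronglyMeasurable ?_
    filter_upwards with x
    rw [Real.norm_eq_abs, abs_of_nonneg ENNReal.toReal_nonneg]
    exact ENNReal.toReal_le_of_le_ofReal one_pos.le (by simpa using prob_le_one)
  have hiU : Integrable (fun x => (κU x {z | τ ≤ max (s x) (s z)}).toReal) μ := by
    refine (integrable_const (1 : ℝ)).mono' hmU.ennreal_toReal.aestronglyMeasurable ?_
    filter_upwards with x
    rw [Real.norm_eq_abs, abs_of_nonneg ENNReal.toReal_nonneg]
    exact ENNReal.toReal_le_of_le_ofReal one_pos.le (by simpa using prob_le_one)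
  rw [sub_nonneg]
  refine integral_mono hiU hiP fun x => ?_
  exact ENNReal.toReal_le_toReal (measure_ne_top _ _) (measure_ne_top _ _) |>.mpr (hpt x)
end

section
/- (Theorem 6.4, the two-ticket scheme reduces resume outcome disparity) Let a, τ ∈ ℝ. Let A_P, A_U, B₁, B₂ be real-valued random variables on a common probability space such that A_g and B_k are independent for each g ∈ {P, U} and k ∈ {1, 2}. Suppose P(A_P < τ) ≤ P(A_U < τ) and P(B₂ < τ) ≤ P(B₁ < τ). Define Δ⁽ᵏ⁾ := P(max(a, max(A_P, B_k)) ≥ τ) − P(max(a, max(A_U, B_k)) ≥ τ) for k ∈ {1, 2}. Then Δ⁽²⁾ ≤ Δ⁽¹⁾. -/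
open MeasureTheory ProbabilityTheory

private lemma key_eq {Ω : Type*} [MeasurableSpace Ω] (P : Measure Ω) [IsProbabilityMeasure P]
    {a τ : ℝ} (ha : a < τ) {A B : Ω → ℝ}
    (hA : Measurable A) (hB : Measurable B) (hindep : IndepFun A B P) :
    (P {ω | τ ≤ max a (max (A ω) (B ω))}).toReal
      = 1 - (P {ω | A ω < τ}).toReal * (P {ω | B ω < τ}).toReal := by
  have hset : {ω | τ ≤ max a (max (A ω) (B ω))}
      = (A ⁻¹' Set.Iio τ ∩ B ⁻¹' Set.Iio τ)ᶜ := by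
    ext ω
    simp only [Set.mem_setOf_eq, Set.mem_compl_iff, Set.mem_inter_iff, Set.mem_preimage,
      Set.mem_Iio, le_max_iff, not_and_or, not_lt]
    constructor
    · rintro (h | h | h)
      · exact absurd h (not_le.mpr ha)
      · exact Or.inl h
      · exact Or.inr h
    · rintro (h | h)
      · exact Or.inr (Or.inl h)
      · exact Or.inr (Or.inr h)
  have hmeas : MeasurableSet (A ⁻¹' Set.Iio τ ∩ B ⁻¹' Set.Iio τ) :=
    (hA measurableSet_Iio).inter (hB measurableSet_Iio)
  have hmul := hindep.measure_inter_preimage_eq_mul (Set.Iio τ) (Set.Iio τ)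
    measurableSet_Iio measurableSet_Iio
  rw [hset, measure_compl hmeas (measure_ne_top P _), hmul]
  have h1 : P (A ⁻¹' Set.Iio τ) ≠ ⊤ := measure_ne_top P _
  have h2 : P (B ⁻¹' Set.Iio τ) ≠ ⊤ := measure_ne_top P _
  rw [ENNReal.toReal_sub_of_le (le_trans (mul_le_one' prob_le_one prob_le_one)
    (by simp)) (by simp), ENNReal.toReal_mul]
  simp only [measure_univ, ENNReal.toReal_one]
  rfl

/-- Theorem 6.4: the two-ticket scheme with a dominating Hirer LLM reduces the
resume outcome disparity. -/
theorem two_ticket_reduces_disparity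
    {Ω : Type*} [MeasurableSpace Ω] (P : Measure Ω) [IsProbabilityMeasure P]
    (a τ : ℝ) (AP AU B₁ B₂ : Ω → ℝ)
    (hAP : Measurable AP) (hAU : Measurable AU)
    (hB₁ : Measurable B₁) (hB₂ : Measurable B₂)
    (hindepP1 : IndepFun AP B₁ P) (hindepP2 : IndepFun AP B₂ P)
    (hindepU1 : IndepFun AU B₁ P) (hindepU2 : IndepFun AU B₂ P)
    (hA : P {ω | AP ω < τ} ≤ P {ω | AU ω < τ})
    (hB : P {ω | B₂ ω < τ} ≤ P {ω | B₁ ω < τ}) :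
    (P {ω | τ ≤ max a (max (AP ω) (B₂ ω))}).toReal
      - (P {ω | τ ≤ max a (max (AU ω) (B₂ ω))}).toReal
    ≤ (P {ω | τ ≤ max a (max (AP ω) (B₁ ω))}).toReal
      - (P {ω | τ ≤ max a (max (AU ω) (B₁ ω))}).toReal := by
  rcases le_or_gt τ a with hτa | hτa
  · have h : ∀ A B : Ω → ℝ, {ω | τ ≤ max a (max (A ω) (B ω))} = Set.univ := by
      intro A B
      ext ω
      simp only [Set.mem_setOf_eq, Set.mem_univ, iff_true, le_max_iff]
      exact Or.inl hτa
    rw [h AP B₂, h AU B₂, h AP B₁, h AU B₁]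
  · rw [key_eq P hτa hAP hB₂ hindepP2, key_eq P hτa hAU hB₂ hindepU2,
      key_eq P hτa hAP hB₁ hindepP1, key_eq P hτa hAU hB₁ hindepU1]
    have hA' : (P {ω | AP ω < τ}).toReal ≤ (P {ω | AU ω < τ}).toReal :=
      ENNReal.toReal_mono (measure_ne_top P _) hA
    have hB' : (P {ω | B₂ ω < τ}).toReal ≤ (P {ω | B₁ ω < τ}).toReal :=
      ENNReal.toReal_mono (measure_ne_top P _) hB
    have h1 : 0 ≤ (P {ω | B₂ ω < τ}).toReal := ENNReal.toReal_nonneg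
    nlinarith [mul_le_mul_of_nonneg_left hB' (sub_nonneg.mpr hA')]
end
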